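/- arXiv:2309.06615 — 4 statements merged into one kernel-verified Lean document; each statement's English description precedes it below -/
import Mathlib

section
/- Let A be an initialized DiPA and let ρ be a feasible run of A from the initial state q_init such that C=ρ[i:j] (for some 0≤i<j≤|ρ|) is a non-leaking cycle. Then for every m>0, the run ρ[0:i]·(ρ[i:j])^m·ρ[j:] is feasible. -/
/-!  Formalization of DiPA (Differentially Private Automata) with multiple storage
variables, following Chadha–Sistla–Viswanathan–Bhusal. -/

/-- A guard: for each storage variable, `none` means the variable is unconstrained,
`some true` means the atomic condition `insample ≥ x_i` is a conjunct, and
`some false` means `insample < x_i` is a conjunct.  The guard `true` is `fun _ => none`. -/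
abbrev Guard (k : ℕ) := Fin k → Option Bool

/-- Satisfaction of a guard by a sampled value `z` and a valuation `η` of the
storage variables. -/
def GuardSat {k : ℕ} (c : Guard k) (z : ℝ) (η : Fin k → ℝ) : Prop :=
  ∀ i, (c i = some true → η i ≤ z) ∧ (c i = some false → z < η i)

/-- The data of a DiPA, without the axioms (used also for the augmentation).
Outputs are elements of `Γ ⊕ Bool` where `Sum.inr false` denotes `insample` and
`Sum.inr true` denotes `insample'`.  `P q = (d, μ, d', μ')`. -/
structure PreDiPA (k : ℕ) where
  Q : Type
  Γ : Type
  isInput : Q → Bool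
  qinit : Q
  P : Q → ℚ × ℚ × ℚ × ℚ
  δ : Q → Guard k → Option (Q × (Γ ⊕ Bool) × (Fin k → Bool))

namespace PreDiPA

variable {k : ℕ}

/-- A transition `t = (q, c, q', o, b)` with `δ q c = some (q', o, b)`. -/
structure Trans (A : PreDiPA k) where
  src : A.Q
  grd : Guard k
  trg : A.Q
  out : A.Γ ⊕ Bool
  asgn : Fin k → Bool
  valid : A.δ src grd = some (trg, out, asgn)

/-- Input sequences: `none` denotes `τ`. -/
abbrev InSeq := List (Option ℝ)

/-- Output sequences. -/
abbrev OutSeq (A : PreDiPA k) := List (A.Γ ⊕ EReal × EReal)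

section RunLevel

variable {A : PreDiPA k}

/-- A run is a chained sequence of transitions. -/
def IsRun (ρ : List A.Trans) : Prop :=
  List.Chain' (fun t t' => t.trg = t'.src) ρ

/-- A run starting at state `q`. -/
def IsRunFrom (q : A.Q) (ρ : List A.Trans) : Prop :=
  IsRun ρ ∧ ∀ t, ρ.head? = some t → t.src = q

/-- Whether the `i`-th transition of `ρ` assigns `insample` to `x`. -/
def assignAt (ρ : List A.Trans) (x : Fin k) (i : ℕ) : Bool :=
  (ρ[i]?).elim false fun t => t.asgn x

/-- The constraint placed on variable `x` by the guard of the `i`-th transition. -/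
def grdAt (ρ : List A.Trans) (x : Fin k) (i : ℕ) : Option Bool :=
  (ρ[i]?).elim none fun t => t.grd x

/-- `lastassign ρ x j` is the largest `i < j` such that the `i`-th transition assigns
`x`, and `⊥` (i.e. `−∞`) if there is no such `i`. -/
def lastassign (ρ : List A.Trans) (x : Fin k) (j : ℕ) : WithBot ℕ :=
  ((Finset.range j).filter fun i => assignAt ρ x i = true).max

/-- Edges of the dependency graph `G_ρ`: an edge `(j, lastassign ρ x j)` for every `j`
with `x ∈ largev(t_j)`, and an edge `(lastassign ρ x j, j)` for every `j` with
`x ∈ smallv(t_j)` (keeping only edges whose endpoints are vertices). -/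
def DepEdge (ρ : List A.Trans) (a b : ℕ) : Prop :=
  (∃ x, a < ρ.length ∧ grdAt ρ x a = some false ∧ lastassign ρ x a = (b : WithBot ℕ)) ∨
  (∃ x, b < ρ.length ∧ grdAt ρ x b = some true ∧ lastassign ρ x b = (a : WithBot ℕ))

/-- A run is feasible iff its dependency graph is acyclic. -/
def Feasible (ρ : List A.Trans) : Prop :=
  ∀ a b, DepEdge ρ a b → ¬ Relation.ReflTransGen (DepEdge ρ) b a

/-- A cycle is a run whose first state coincides with its last state. -/
def IsCycle (ρ : List A.Trans) : Prop :=
  IsRun ρ ∧ ∃ t₁ t₂, ρ.head? = some t₁ ∧ ρ.getLast? = some t₂ ∧ t₁.src = t₂.trg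

/-- A cycle `C` is non-leaking if no variable used (referenced in a guard) in `C²`
has been assigned within `C²`. -/
def NonLeakingCycle (C : List A.Trans) : Prop :=
  IsCycle C ∧ ∀ x i, grdAt (C ++ C) x i ≠ none → lastassign (C ++ C) x i = ⊥

/-- The slice `ρ[i:j]`. -/
def slice (ρ : List A.Trans) (i j : ℕ) : List A.Trans := (ρ.drop i).take (j - i)

/-- `m`-fold concatenation `C^m` of a sequence of transitions with itself. -/
def repRun (C : List A.Trans) : ℕ → List A.Trans
  | 0 => []
  | m + 1 => C ++ repRun C m

/-- `ρ` is a run on input sequence `σ` producing output sequence `γ`. -/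
def IsRunOn (ρ : List A.Trans) (σ : InSeq) (γ : OutSeq A) : Prop :=
  ρ.length = σ.length ∧ ρ.length = γ.length ∧
  ∀ (i : ℕ) (t : A.Trans), ρ[i]? = some t →
    (σ[i]? = some none ↔ A.isInput t.src = false) ∧
    (∀ g : A.Γ, t.out = Sum.inl g → γ[i]? = some (Sum.inl g)) ∧
    (∀ b : Bool, t.out = Sum.inr b → ∃ p : EReal × EReal, γ[i]? = some (Sum.inr p))

end RunLevel

/-- Integral of `f` over the open interval `(l, u)` with extended-real endpoints
(`0` if the interval is empty). -/
noncomputable def intE (l u : EReal) (f : ℝ → ℝ) : ℝ :=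
  ∫ z in {z : ℝ | l < (z : EReal) ∧ (z : EReal) < u}, f z

/-- The density of the Laplace distribution with scale `s` and mean `m`. -/
noncomputable def lap (s m z : ℝ) : ℝ := s / 2 * Real.exp (-s * |z - m|)

section ProbDef

variable {A : PreDiPA k}

/-- `Prob ε ρ σ γ η` is the probability of the computation `κ = (ρ, σ, γ)` for the
privacy budget `ε` and the initial valuation `η`. -/
noncomputable def Prob (ε : ℝ) : List A.Trans → InSeq → OutSeq A → (Fin k → ℝ) → ℝ
  | [], _, _, _ => 1
  | t :: ρ, σ, γ, η =>
    let d : ℝ := ((A.P t.src).1 : ℝ)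
    let μ : ℝ := ((A.P t.src).2.1 : ℝ)
    let d' : ℝ := ((A.P t.src).2.2.1 : ℝ)
    let μ' : ℝ := ((A.P t.src).2.2.2 : ℝ)
    let a0 : ℝ := match σ.head? with | some (some a) => a | _ => 0
    let lu : EReal × EReal := match γ.head? with | some (Sum.inr p) => p | _ => (⊥, ⊤)
    let smax : EReal :=
      (Finset.univ.filter fun i => t.grd i = some true).sup fun i => ((η i : ℝ) : EReal)
    let lmin : EReal :=
      (Finset.univ.filter fun i => t.grd i = some false).inf fun i => ((η i : ℝ) : EReal)
    match t.out with
    | Sum.inr true =>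
        intE lu.1 lu.2 (fun z => lap (d' * ε) (μ' + a0) z) *
        intE smax lmin (fun z => lap (d * ε) (μ + a0) z *
          Prob ε ρ σ.tail γ.tail fun i => if t.asgn i then z else η i)
    | _ =>
        intE (max smax lu.1) (min lmin lu.2) (fun z => lap (d * ε) (μ + a0) z *
          Prob ε ρ σ.tail γ.tail fun i => if t.asgn i then z else η i)

end ProbDef

/-- Adjacency of single entries of input sequences. -/
def AdjEntry : Option ℝ → Option ℝ → Prop
  | some a, some b => |a - b| ≤ 1
  | none, none => True
  | _, _ => False

/-- Adjacency of input sequences. -/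
def Adjacent (σ₁ σ₂ : InSeq) : Prop := List.Forall₂ AdjEntry σ₁ σ₂

/-- The total probability, over all runs from the initial state on `σ` producing `γ`,
of the respective computations.  (For runs from the initial state of an initialized
automaton, `Prob` does not depend on the initial valuation, so we fix it to be `0`.) -/
noncomputable def runProbSum (A : PreDiPA k) (ε : ℝ) (σ : InSeq) (γ : OutSeq A) : ℝ :=
  ∑' ρ : {ρ : List A.Trans // IsRunFrom A.qinit ρ ∧ IsRunOn ρ σ γ},
    Prob ε ρ.val σ γ fun _ => 0

/-- `A` is `D·ε`-differentially private. -/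
def DPat (A : PreDiPA k) (D ε : ℝ) : Prop :=
  ∀ σ₁ σ₂ (γ : OutSeq A), Adjacent σ₁ σ₂ →
    runProbSum A ε σ₁ γ ≤ Real.exp (D * ε) * runProbSum A ε σ₂ γ

/-- `A` is differentially private. -/
def DiffPrivate (A : PreDiPA k) : Prop := ∃ D > (0 : ℝ), ∀ ε > (0 : ℝ), DPat A D ε

/-- `A` is initialized: on every run from the initial state, every variable referenced
in a guard has been assigned by an earlier transition. -/
def Initialized (A : PreDiPA k) : Prop :=
  ∀ ρ : List A.Trans, IsRunFrom A.qinit ρ →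
    ∀ i x, grdAt ρ x i ≠ none → ∃ j < i, assignAt ρ x j = true

section BadRuns

variable {A : PreDiPA k}

/-- A leaking cycle. -/
def LeakingCycle (ρ : List A.Trans) : Prop :=
  IsRunFrom A.qinit ρ ∧
  ∃ j < ρ.length, IsCycle (ρ.drop j) ∧
    (∃ i₁ i₂ x, j ≤ i₁ ∧ j ≤ i₂ ∧ assignAt ρ x i₁ = true ∧ grdAt ρ x i₂ ≠ none) ∧
    ∀ m : ℕ, Feasible (ρ ++ repRun (ρ.drop j) m)

/-- A leaking pair. -/
def LeakingPair (ρ : List A.Trans) : Prop :=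
  IsRunFrom A.qinit ρ ∧ Feasible ρ ∧
  ∃ i₁ j₁ i₂ j₂ : ℕ, i₁ < j₁ ∧ j₁ ≤ ρ.length ∧ i₂ < j₂ ∧ j₂ ≤ ρ.length ∧
    NonLeakingCycle (slice ρ i₁ j₁) ∧ NonLeakingCycle (slice ρ i₂ j₂) ∧
    (j₁ ≤ i₂ ∨ j₂ ≤ i₁) ∧
    ∃ ks : List ℕ, 2 ≤ ks.length ∧ List.Chain' (DepEdge ρ) ks ∧
      i₁ ≤ ks.head! ∧ ks.head! < j₁ ∧ i₂ ≤ ks.getLast! ∧ ks.getLast! < j₂ ∧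
      ks[1]! < ks.head! ∧ ks[ks.length - 2]! < ks.getLast!

/-- A disclosing cycle. -/
def DisclosingCycle (ρ : List A.Trans) : Prop :=
  IsRunFrom A.qinit ρ ∧ Feasible ρ ∧
  ∃ j i : ℕ, j ≤ i ∧ i < ρ.length ∧ NonLeakingCycle (ρ.drop j) ∧
    ∃ t, ρ[i]? = some t ∧ A.isInput t.src = true ∧ ∃ b : Bool, t.out = Sum.inr b

/-- A privacy violating path. -/
def PrivacyViolating (ρ : List A.Trans) : Prop :=
  IsRunFrom A.qinit ρ ∧ Feasible ρ ∧
  ∃ i j : ℕ, i ≤ j ∧ j ≤ ρ.length ∧ NonLeakingCycle (slice ρ i j) ∧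
    ∃ ks : List ℕ, 2 ≤ ks.length ∧ List.Chain' (DepEdge ρ) ks ∧
      (((∃ t, ρ[ks.head!]? = some t ∧ t.out = Sum.inr false) ∧
          ks[ks.length - 2]! < ks.getLast! ∧ i ≤ ks.getLast! ∧ ks.getLast! < j) ∨
       (i ≤ ks.head! ∧ ks.head! < j ∧ ks[1]! < ks.head! ∧
          ∃ t, ρ[ks.getLast!]? = some t ∧ t.out = Sum.inr false))

/-- A feasible run is strongly feasible if the sampling means at non-input positions
respect the order imposed by the dependency graph. -/
def StronglyFeasible (ρ : List A.Trans) : Prop :=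
  Feasible ρ ∧
  ∀ i j ti tj, Relation.TransGen (DepEdge ρ) i j → ρ[i]? = some ti → ρ[j]? = some tj →
    A.isInput ti.src = false → A.isInput tj.src = false →
    (A.P ti.src).2.1 < (A.P tj.src).2.1

end BadRuns

/-- `A` is well-formed: no leaking cycles, leaking pairs, disclosing cycles or
privacy violating paths. -/
def WellFormed (A : PreDiPA k) : Prop :=
  (∀ ρ : List A.Trans, ¬ LeakingCycle ρ) ∧ (∀ ρ : List A.Trans, ¬ LeakingPair ρ) ∧
  (∀ ρ : List A.Trans, ¬ DisclosingCycle ρ) ∧ (∀ ρ : List A.Trans, ¬ PrivacyViolating ρ)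

/-- Output distinction. -/
def OutputDistinct (A : PreDiPA k) : Prop :=
  ∀ t₁ t₂ : A.Trans, t₁ ≠ t₂ → t₁.src = t₂.src →
    t₁.out ≠ t₂.out ∧ ((∃ g, t₁.out = Sum.inl g) ∨ (∃ g, t₂.out = Sum.inl g))

/-- The strong feasibility assumption: every feasible run from the initial state is
strongly feasible. -/
def StrongFeasibility (A : PreDiPA k) : Prop :=
  ∀ ρ : List A.Trans, IsRunFrom A.qinit ρ → Feasible ρ → StronglyFeasible ρ

end PreDiPA

/-- A DiPA: a `PreDiPA` whose state space and output alphabet are finite, whose scale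
parameters are nonnegative, which is deterministic (guards of distinct transitions
from the same state are jointly unsatisfiable) and in which all transitions from
non-input states carry the guard `true`. -/
structure DiPA (k : ℕ) extends PreDiPA k where
  finQ : Finite Q
  finΓ : Finite Γ
  dNonneg : ∀ q, 0 ≤ (P q).1
  d'Nonneg : ∀ q, 0 ≤ (P q).2.2.1
  determinism : ∀ q c c' r r', δ q c = some r → δ q c' = some r' → c ≠ c' →
    ¬ ∃ (z : ℝ) (η : Fin k → ℝ), GuardSat c z η ∧ GuardSat c' z η
  noninput_true : ∀ q c r, isInput q = false → δ q c = some r → c = fun _ => none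

open PreDiPA

/-!
Duplicating a block `C` whose guarded variables are never assigned inside `C` cannot create a
cycle in the dependency graph: the map sending each position of `u C C w` to the position of
`u C w` it was copied from sends dependency edges to dependency edges. A guard in the second
copy of `C` reads a variable last assigned in `u`, exactly as its original does; after the
copies, the last assignment of a variable sits in the same relative place in both runs, since an
assignment in the first copy is overridden by its twin in the second. Pumping a non-leaking cycle
is this duplication iterated.
-/

namespace PreDiPA

variable {k : ℕ} {A : PreDiPA k}

lemma assignAt_congr {ρ ρ' : List A.Trans} {p q : ℕ} (h : ρ[p]? = ρ'[q]?) (x : Fin k) :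
    assignAt ρ x p = assignAt ρ' x q := by
  rw [assignAt, assignAt, h]

lemma grdAt_congr {ρ ρ' : List A.Trans} {p q : ℕ} (h : ρ[p]? = ρ'[q]?) (x : Fin k) :
    grdAt ρ x p = grdAt ρ' x q := by
  rw [grdAt, grdAt, h]

lemma lastassign_eq_coe_iff {ρ : List A.Trans} {x : Fin k} {p b : ℕ} :
    lastassign ρ x p = (b : WithBot ℕ) ↔
      b < p ∧ assignAt ρ x b = true ∧ ∀ r, b < r → r < p → assignAt ρ x r = false := by
  simp only [lastassign]
  constructor
  · intro h
    obtain ⟨hbp, hb⟩ := Finset.mem_filter.mp (Finset.mem_of_max h)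
    refine ⟨Finset.mem_range.mp hbp, hb, fun r hbr hrp => ?_⟩
    by_contra hr
    have hle := h ▸ Finset.le_max
      (Finset.mem_filter.mpr ⟨Finset.mem_range.mpr hrp, by simpa using hr⟩)
    exact absurd (WithBot.coe_le_coe.mp hle) (not_le.mpr hbr)
  · rintro ⟨hbp, hb, hmax⟩
    refine le_antisymm (Finset.max_le fun a ha => ?_) (Finset.le_max ?_)
    · obtain ⟨hap, ha⟩ := Finset.mem_filter.mp ha
      refine WithBot.coe_le_coe.mpr (not_lt.mp fun hba => ?_)
      simp [hmax a hba (Finset.mem_range.mp hap)] at ha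
    · exact Finset.mem_filter.mpr ⟨Finset.mem_range.mpr hbp, hb⟩

lemma lastassign_eq_bot_iff {ρ : List A.Trans} {x : Fin k} {p : ℕ} :
    lastassign ρ x p = ⊥ ↔ ∀ r, r < p → assignAt ρ x r = false := by
  simp [lastassign, Finset.max_eq_bot, Finset.filter_eq_empty_iff]

lemma lastassign_congr {ρ ρ' : List A.Trans} {x : Fin k} {p : ℕ}
    (h : ∀ r < p, assignAt ρ x r = assignAt ρ' x r) : lastassign ρ x p = lastassign ρ' x p := by
  simp only [lastassign]
  congr 1
  exact Finset.filter_congr fun r hr => by rw [h r (Finset.mem_range.mp hr)]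

lemma lastassign_eq_of_assignAt_eq_false {ρ : List A.Trans} {x : Fin k} {q p : ℕ} (hqp : q ≤ p)
    (h : ∀ r, q ≤ r → r < p → assignAt ρ x r = false) : lastassign ρ x p = lastassign ρ x q := by
  simp only [lastassign]
  congr 1
  ext r
  simp only [Finset.mem_filter, Finset.mem_range]
  constructor
  · rintro ⟨hrp, hr⟩
    exact ⟨not_le.mp fun hqr => by simp [h r hqr hrp] at hr, hr⟩
  · rintro ⟨hrq, hr⟩
    exact ⟨hrq.trans_le hqp, hr⟩

lemma DepEdge.map {ρ ρ' : List A.Trans} {f : ℕ → ℕ} (hf : ∀ p, ρ'[p]? = ρ[f p]?)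
    (hlast : ∀ x p (b : ℕ), grdAt ρ' x p ≠ none → lastassign ρ' x p = (b : WithBot ℕ) →
      lastassign ρ x (f p) = (f b : WithBot ℕ))
    {a b : ℕ} : DepEdge ρ' a b → DepEdge ρ (f a) (f b) := by
  have hlen : ∀ p, p < ρ'.length → f p < ρ.length := fun p hp => by
    by_contra h
    simpa [List.getElem?_eq_none (not_lt.mp h), hp] using hf p
  rintro (⟨x, hl, hg, hla⟩ | ⟨x, hl, hg, hla⟩)
  · exact Or.inl ⟨x, hlen a hl, grdAt_congr (hf a) x ▸ hg, hlast x a b (by simp [hg]) hla⟩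
  · exact Or.inr ⟨x, hlen b hl, grdAt_congr (hf b) x ▸ hg, hlast x b a (by simp [hg]) hla⟩

lemma Feasible.of_depEdge_map {ρ ρ' : List A.Trans} (f : ℕ → ℕ)
    (hf : ∀ a b, DepEdge ρ' a b → DepEdge ρ (f a) (f b)) (h : Feasible ρ) : Feasible ρ' :=
  fun a b hab hba => h _ _ (hf a b hab) (hba.lift f hf)

def UsedVarsUnassigned (C : List A.Trans) : Prop :=
  ∀ x q s, grdAt C x q ≠ none → assignAt C x s = false

lemma NonLeakingCycle.usedVarsUnassigned {C : List A.Trans} (hC : NonLeakingCycle C) :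
    UsedVarsUnassigned C := by
  intro x q s hq
  have hqL : q < C.length := by
    by_contra h
    simp [grdAt, List.getElem?_eq_none (not_lt.mp h)] at hq
  have hshift : (C ++ C)[C.length + q]? = C[q]? := by
    rw [List.getElem?_append_right (by omega), Nat.add_sub_cancel_left]
  have hbot := lastassign_eq_bot_iff.mp (hC.2 x _ (grdAt_congr hshift x ▸ hq))
  rcases lt_or_ge s C.length with hs | hs
  · rw [← hbot s (by omega)]
    exact assignAt_congr (List.getElem?_append_left hs).symm x
  · simp [assignAt, List.getElem?_eq_none hs]

/-- The position of `u C w` that position `p` of `u C C w` copies, for `n = |u|`, `L = |C|`. -/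
def dupSource (n L p : ℕ) : ℕ := if p < n + L then p else p - L

section Duplicate

variable {u C w : List A.Trans}

lemma getElem?_dup_of_lt {p : ℕ} (hp : p < u.length + C.length) :
    (u ++ C ++ C ++ w)[p]? = (u ++ C ++ w)[p]? := by
  have hp' : p < (u ++ C).length := by rwa [List.length_append]
  rw [List.append_assoc (u ++ C), List.getElem?_append_left (l₁ := u ++ C) hp',
    List.getElem?_append_left (l₁ := u ++ C) hp']

lemma getElem?_dup_add_length {r : ℕ} (hr : u.length ≤ r) :
    (u ++ C ++ C ++ w)[r + C.length]? = (u ++ C ++ w)[r]? := by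
  simp only [List.append_assoc]
  rw [List.getElem?_append_right (by omega), List.getElem?_append_right (by omega),
    List.getElem?_append_right hr]
  congr 1
  omega

lemma getElem?_dup (p : ℕ) :
    (u ++ C ++ C ++ w)[p]? = (u ++ C ++ w)[dupSource u.length C.length p]? := by
  unfold dupSource
  split_ifs with hp
  · exact getElem?_dup_of_lt hp
  · simpa [Nat.sub_add_cancel (show C.length ≤ p by omega)] using
      getElem?_dup_add_length (C := C) (w := w) (show u.length ≤ p - C.length by omega)

lemma getElem?_append_length_add {s : ℕ} (hs : s < C.length) :
    (u ++ C ++ w)[u.length + s]? = C[s]? := by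
  rw [List.append_assoc, List.getElem?_append_right (by omega), Nat.add_sub_cancel_left,
    List.getElem?_append_left hs]

lemma assignAt_dup_of_lt (x : Fin k) {r : ℕ} (hr : r < u.length + C.length) :
    assignAt (u ++ C ++ C ++ w) x r = assignAt (u ++ C ++ w) x r :=
  assignAt_congr (getElem?_dup_of_lt hr) x

lemma assignAt_dup_add_length (x : Fin k) {r : ℕ} (hr : u.length ≤ r) :
    assignAt (u ++ C ++ C ++ w) x (r + C.length) = assignAt (u ++ C ++ w) x r :=
  assignAt_congr (getElem?_dup_add_length hr) x

lemma UsedVarsUnassigned.assignAt_append {x : Fin k} {q r : ℕ} (hC : UsedVarsUnassigned C)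
    (hq : grdAt C x q ≠ none) (hr : u.length ≤ r) (hr' : r < u.length + C.length) :
    assignAt (u ++ C ++ w) x r = false := by
  rw [← Nat.add_sub_cancel' hr, assignAt_congr (getElem?_append_length_add (by omega)) x]
  exact hC x _ _ hq

lemma lastassign_dup_of_second_copy (hC : UsedVarsUnassigned C) {x : Fin k} {p : ℕ}
    (hg : grdAt (u ++ C ++ C ++ w) x p ≠ none) (hp : u.length + C.length ≤ p)
    (hp' : p < u.length + C.length + C.length) :
    lastassign (u ++ C ++ C ++ w) x p = lastassign (u ++ C ++ w) x u.length ∧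
      lastassign (u ++ C ++ w) x (p - C.length) = lastassign (u ++ C ++ w) x u.length := by
  have hused : grdAt C x (p - C.length - u.length) ≠ none := by
    rwa [← grdAt_congr (getElem?_append_length_add (u := u) (w := w) (by omega)),
      Nat.add_sub_cancel' (by omega), ← grdAt_congr (getElem?_dup_add_length (by omega)),
      Nat.sub_add_cancel (by omega)]
  refine ⟨?_, lastassign_eq_of_assignAt_eq_false (by omega) fun r h₁ h₂ =>
    hC.assignAt_append hused h₁ (by omega)⟩
  rw [lastassign_eq_of_assignAt_eq_false (q := u.length) (by omega),
    lastassign_congr fun r hr => assignAt_dup_of_lt x (by omega)]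
  intro r h₁ h₂
  rcases lt_or_ge r (u.length + C.length) with hr | hr
  · rw [assignAt_dup_of_lt x hr]
    exact hC.assignAt_append hused h₁ hr
  · rw [← Nat.sub_add_cancel (show C.length ≤ r by omega), assignAt_dup_add_length x (by omega)]
    exact hC.assignAt_append hused (by omega) (by omega)

lemma lastassign_dup (hC : UsedVarsUnassigned C) {x : Fin k} {p b : ℕ}
    (hg : grdAt (u ++ C ++ C ++ w) x p ≠ none)
    (h : lastassign (u ++ C ++ C ++ w) x p = (b : WithBot ℕ)) :
    lastassign (u ++ C ++ w) x (dupSource u.length C.length p) =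
      (dupSource u.length C.length b : WithBot ℕ) := by
  obtain ⟨hbp, hb, hmax⟩ := lastassign_eq_coe_iff.mp h
  rcases lt_or_ge p (u.length + C.length) with hp | hp
  · rw [dupSource, dupSource, if_pos hp, if_pos (by omega), ← h]
    exact lastassign_congr fun r hr => (assignAt_dup_of_lt x (by omega)).symm
  rcases lt_or_ge p (u.length + C.length + C.length) with hp' | hp'
  · obtain ⟨h₁, h₂⟩ := lastassign_dup_of_second_copy hC hg hp hp'
    have hbu : b < u.length := (lastassign_eq_coe_iff.mp (h₁ ▸ h)).1
    rw [dupSource, dupSource, if_neg (by omega), if_pos (by omega), ← h, h₁, h₂]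
  · rw [dupSource, if_neg (by omega), lastassign_eq_coe_iff]
    refine ⟨by unfold dupSource; split_ifs <;> omega, ?_, fun r h₁ h₂ => ?_⟩
    · rwa [← assignAt_congr (getElem?_dup b) x]
    · unfold dupSource at h₁
      rcases lt_or_ge r u.length with hr | hr
      · rw [← assignAt_dup_of_lt x (by omega)]
        exact hmax r (by split_ifs at h₁ <;> omega) (by omega)
      · rw [← assignAt_dup_add_length x hr]
        exact hmax _ (by split_ifs at h₁ <;> omega) (by omega)

lemma Feasible.dup (hC : UsedVarsUnassigned C) (h : Feasible (u ++ C ++ w)) :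
    Feasible (u ++ C ++ C ++ w) :=
  h.of_depEdge_map _ fun _ _ => DepEdge.map getElem?_dup fun _ _ _ => lastassign_dup hC

end Duplicate

lemma repRun_succ' (C : List A.Trans) (n : ℕ) : repRun C (n + 1) = repRun C n ++ C := by
  induction n with
  | zero => simp [repRun]
  | succ n ih =>
    show C ++ repRun C (n + 1) = (C ++ repRun C n) ++ C
    rw [ih, List.append_assoc]

lemma Feasible.append_repRun {u C w : List A.Trans} (hC : UsedVarsUnassigned C)
    (h : Feasible (u ++ C ++ w)) (n : ℕ) : Feasible (u ++ repRun C (n + 1) ++ w) := by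
  induction n with
  | zero => simpa [repRun] using h
  | succ n ih =>
    have ih' : Feasible ((u ++ repRun C n) ++ C ++ w) := by
      simpa only [repRun_succ', List.append_assoc] using ih
    simpa only [repRun_succ', List.append_assoc] using ih'.dup hC

end PreDiPA

theorem nonLeakingCycle_repeatable_general {k : ℕ} (A : DiPA k)
    (ρ : List A.toPreDiPA.Trans)
    (hfeas : Feasible ρ)
    (i j : ℕ) (hij : i < j)
    (hC : NonLeakingCycle (slice ρ i j)) :
    ∀ m : ℕ, 0 < m →
      Feasible (ρ.take i ++ repRun (slice ρ i j) m ++ ρ.drop j) := by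
  rintro (_ | n) hm
  · exact absurd hm (lt_irrefl 0)
  have hsplit : ρ.take i ++ slice ρ i j ++ ρ.drop j = ρ := by
    have hdrop : ρ.drop j = (ρ.drop i).drop (j - i) := by
      rw [List.drop_drop, Nat.add_sub_cancel' hij.le]
    rw [slice, hdrop, List.append_assoc, List.take_append_drop, List.take_append_drop]
  exact (hsplit ▸ hfeas).append_repRun hC.usedVarsUnassigned n

theorem nonLeakingCycle_repeatable {k : ℕ} (A : DiPA k)
    (hinit : Initialized A.toPreDiPA)
    (ρ : List A.toPreDiPA.Trans)
    (hrun : IsRunFrom A.toPreDiPA.qinit ρ)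
    (hfeas : Feasible ρ)
    (i j : ℕ) (hij : i < j) (hj : j ≤ ρ.length)
    (hC : NonLeakingCycle (slice ρ i j)) :
    ∀ m : ℕ, 0 < m →
      Feasible (ρ.take i ++ repRun (slice ρ i j) m ++ ρ.drop j) :=
  nonLeakingCycle_repeatable_general A ρ hfeas i j hij hC
end

section
/- Let A be an initialized DiPA and aug(A) its augmentation. (i) If κ=(ρ,σ,γ) is a computation of aug(A) and η is a valuation compatible with src(ρ), then for every ε>0, Prob(ε,η,κ)=Prob(ε,η,proj(κ)), and the dependency graph G_ρ equals the dependency graph G_{proj(ρ)}. (ii) If ρ is a feasible run of A from q_init, then there is a unique run ρ† of aug(A) from the initial state of aug(A) with proj(ρ†)=ρ. -/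
namespace PreDiPA

variable {k : ℕ}

/-- `sm_vars`. -/
def smB (lt eq : Fin k → Fin k → Bool) (c : Guard k) (i : Fin k) : Bool :=
  decide (∃ j, (lt i j = true ∨ eq i j = true) ∧ c j = some true)

/-- `lg_vars`. -/
def lgB (lt eq : Fin k → Fin k → Bool) (c : Guard k) (i : Fin k) : Bool :=
  decide (∃ j, (lt j i = true ∨ eq j i = true) ∧ c j = some false)

/-- `lt_before = lt ∪ (sm_vars × lg_vars)`. -/
def ltBeforeB (lt eq : Fin k → Fin k → Bool) (c : Guard k) (i j : Fin k) : Bool :=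
  lt i j || (smB lt eq c i && lgB lt eq c j)

/-- `lt_after`. -/
def ltAfterB (lt eq : Fin k → Fin k → Bool) (c : Guard k) (b : Fin k → Bool)
    (i j : Fin k) : Bool :=
  (!b i && !b j && ltBeforeB lt eq c i j) || (smB lt eq c i && !b i && b j) ||
    (b i && lgB lt eq c j && !b j)

/-- `eq_after`. -/
def eqAfterB (eq : Fin k → Fin k → Bool) (b : Fin k → Bool) (i j : Fin k) : Bool :=
  (!b i && !b j && eq i j) || (b i && b j)

/-- The conditions on a state `(q, lt, eq)` of the augmentation: `lt` is a strict
partial order, `eq` is an equivalence relation, `lt ∩ eq = ∅` and `lt ∪ eq` is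
transitive. -/
def AugOK (lt eq : Fin k → Fin k → Bool) : Prop :=
  (∀ i, lt i i = false) ∧
  (∀ i j l, lt i j = true → lt j l = true → lt i l = true) ∧
  (∀ i, eq i i = true) ∧
  (∀ i j, eq i j = true → eq j i = true) ∧
  (∀ i j l, eq i j = true → eq j l = true → eq i l = true) ∧
  (∀ i j, ¬(lt i j = true ∧ eq i j = true)) ∧
  (∀ i j l, (lt i j = true ∨ eq i j = true) → (lt j l = true ∨ eq j l = true) →
    (lt i l = true ∨ eq i l = true))

instance AugOK.decidable (lt eq : Fin k → Fin k → Bool) : Decidable (AugOK lt eq) := by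
  unfold AugOK; infer_instance

/-- States of the augmentation. -/
def AugState (A : PreDiPA k) : Type :=
  {s : A.Q × (Fin k → Fin k → Bool) × (Fin k → Fin k → Bool) // AugOK s.2.1 s.2.2}

/-- The transition function of the augmentation: the lifted transition from
`(q, lt, eq)` on guard `c` is defined only if `lt_before ∩ eq = ∅` (and the
resulting target is a legitimate augmented state), in which case it goes to
`(q₁, lt_after, eq_after)` with the same output and assignment vector. -/
def augδ (A : PreDiPA k) (s : AugState A) (c : Guard k) :
    Option (AugState A × (A.Γ ⊕ Bool) × (Fin k → Bool)) :=
  (A.δ s.val.1 c).bind fun r =>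
    if h : (∀ i j, ¬(ltBeforeB s.val.2.1 s.val.2.2 c i j = true ∧ s.val.2.2 i j = true)) ∧
        AugOK (ltAfterB s.val.2.1 s.val.2.2 c r.2.2) (eqAfterB s.val.2.2 r.2.2) then
      some (⟨(r.1, ltAfterB s.val.2.1 s.val.2.2 c r.2.2, eqAfterB s.val.2.2 r.2.2), h.2⟩,
        r.2.1, r.2.2)
    else none

theorem augInitOK (k : ℕ) :
    AugOK (fun _ _ : Fin k => false) (fun i j : Fin k => decide (i = j)) := by
  refine ⟨fun _ => rfl, ?_, ?_, ?_, ?_, ?_, ?_⟩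
  · intro i j l h; simp at h
  · intro i; simp
  · intro i j h; simp only [decide_eq_true_eq] at h ⊢; exact h.symm
  · intro i j l h1 h2; simp only [decide_eq_true_eq] at h1 h2 ⊢; exact h1.trans h2
  · intro i j h; exact absurd h.1 (by simp)
  · intro i j l h1 h2
    simp only [Bool.false_eq_true, false_or, decide_eq_true_eq] at h1 h2 ⊢
    exact h1.trans h2

/-- The augmentation of `A`: its initial state is `(q_init, ∅, id)`, its parameters
are those of the underlying states, and its transitions are the lifted transitions. -/
def aug (A : PreDiPA k) : PreDiPA k where
  Q := AugState A
  Γ := A.Γ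
  isInput s := A.isInput s.val.1
  qinit := ⟨(A.qinit, fun _ _ => false, fun i j => decide (i = j)), augInitOK k⟩
  P s := A.P s.val.1
  δ := augδ A

theorem augδ_proj {A : PreDiPA k} {s : AugState A} {c : Guard k}
    {r : AugState A × (A.Γ ⊕ Bool) × (Fin k → Bool)} (h : augδ A s c = some r) :
    A.δ s.val.1 c = some (r.1.val.1, r.2.1, r.2.2) := by
  simp only [augδ, Option.bind_eq_some_iff] at h
  obtain ⟨v, hv, hf⟩ := h
  split at hf
  · cases hf
    simpa using hv
  · exact absurd hf (by simp)

/-- The projection of a transition of `aug A` to a transition of `A`. -/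
def projTrans {A : PreDiPA k} (t : (aug A).Trans) : A.Trans where
  src := t.src.val.1
  grd := t.grd
  trg := t.trg.val.1
  out := t.out
  asgn := t.asgn
  valid := augδ_proj t.valid

/-- A valuation is compatible with an augmented state `(q, lt, eq)` if it respects
the relations `lt` and `eq`. -/
def Compatible {A : PreDiPA k} (η : Fin k → ℝ) (s : AugState A) : Prop :=
  (∀ i j, s.val.2.1 i j = true → η i < η j) ∧ (∀ i j, s.val.2.2 i j = true → η i = η j)

section Weights

variable {B : PreDiPA k}

/-- A cycle transition: a transition lying on some cycle of the automaton. -/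
def CycleTrans (t : B.Trans) : Prop :=
  ∃ C : List B.Trans, IsCycle C ∧ t ∈ C

/-- `j` is a `gcycle_node` of `G_ρ`. -/
def GCycleNode (ρ : List B.Trans) (j : ℕ) : Prop :=
  ∃ ks : List ℕ, 2 ≤ ks.length ∧ List.Chain' (DepEdge ρ) ks ∧ ks.head! = j ∧
    ks[ks.length - 2]! < ks.getLast! ∧
    ∃ t, ρ[ks.getLast!]? = some t ∧ CycleTrans t

/-- `j` is an `lcycle_node` of `G_ρ`. -/
def LCycleNode (ρ : List B.Trans) (j : ℕ) : Prop :=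
  ∃ ks : List ℕ, 2 ≤ ks.length ∧ List.Chain' (DepEdge ρ) ks ∧ ks.getLast! = j ∧
    ks[1]! < ks.head! ∧
    ∃ t, ρ[ks.head!]? = some t ∧ CycleTrans t

/-- `usedvRun ρ x`: the variable `x` is referenced in a guard of `ρ` before being
re-assigned. -/
def usedvRun : List B.Trans → Fin k → Prop
  | [], _ => False
  | t :: ρ, x => t.grd x ≠ none ∨ (t.asgn x = false ∧ usedvRun ρ x)

/-- The transition at position `j` of `ρ` is a quasi-cycle transition. -/
def QuasiCycle (ρ : List B.Trans) (j : ℕ) : Prop :=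
  ∃ t, ρ[j]? = some t ∧ t.out ≠ Sum.inr false ∧
    (∀ x, t.asgn x = true → ¬ usedvRun (ρ.drop (j + 1)) x) ∧
    (∀ x, t.grd x = some true →
      ∃ a : ℕ, lastassign ρ x j = (a : WithBot ℕ) ∧ GCycleNode ρ a) ∧
    (∀ x, t.grd x = some false →
      ∃ a : ℕ, lastassign ρ x j = (a : WithBot ℕ) ∧ LCycleNode ρ a)

open scoped Classical in
/-- The weight `wt(t_j)` of the transition at position `j` of the run `ρ`. -/
noncomputable def wtAt (ρ : List B.Trans) (j : ℕ) : ℝ :=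
  match ρ[j]? with
  | none => 0
  | some t =>
    (if QuasiCycle ρ j then 0 else 1) *
      ((if GCycleNode ρ j ∨ LCycleNode ρ j then 1 else 0) +
        (if B.isInput t.src = true then 1 else 0)) * ((B.P t.src).1 : ℝ) +
    (if t.out = Sum.inr true ∧ B.isInput t.src = true then 1 else 0) *
      ((B.P t.src).2.2.1 : ℝ)

/-- The weight `wt(ρ)` of a run. -/
noncomputable def wtRun (ρ : List B.Trans) : ℝ :=
  ∑ j ∈ Finset.range ρ.length, wtAt ρ j

end Weights

end PreDiPA

open PreDiPA

namespace PreDiPA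
variable {k : ℕ} {A : PreDiPA k}

@[simp] theorem projTrans_grd (t : (aug A).Trans) : (projTrans t).grd = t.grd := rfl
@[simp] theorem projTrans_asgn (t : (aug A).Trans) : (projTrans t).asgn = t.asgn := rfl
@[simp] theorem projTrans_out (t : (aug A).Trans) : (projTrans t).out = t.out := rfl

theorem assignAt_map (ρ : List (aug A).Trans) (x : Fin k) (i : ℕ) :
    assignAt (ρ.map projTrans) x i = assignAt ρ x i := by
  simp only [assignAt, List.getElem?_map]
  cases ρ[i]? <;> rfl

theorem grdAt_map (ρ : List (aug A).Trans) (x : Fin k) (i : ℕ) :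
    grdAt (ρ.map projTrans) x i = grdAt ρ x i := by
  simp only [grdAt, List.getElem?_map]
  cases ρ[i]? <;> rfl

theorem lastassign_map (ρ : List (aug A).Trans) (x : Fin k) (j : ℕ) :
    lastassign (ρ.map projTrans) x j = lastassign ρ x j := by
  simp only [lastassign, assignAt_map]

theorem depEdge_map (ρ : List (aug A).Trans) (a b : ℕ) :
    DepEdge (ρ.map projTrans) a b ↔ DepEdge ρ a b := by
  simp only [DepEdge, grdAt_map, lastassign_map, List.length_map]

theorem prob_map (ε : ℝ) : ∀ (ρ : List (aug A).Trans) (σ : InSeq) (γ : OutSeq A)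
    (η : Fin k → ℝ), Prob ε ρ σ γ η = Prob ε (ρ.map projTrans) σ γ η
  | [], _, _, _ => rfl
  | t :: ρ, σ, γ, η => by
    rw [List.map_cons]
    show Prob ε (t :: ρ) σ γ η = Prob ε (projTrans t :: ρ.map projTrans) σ γ η
    simp only [Prob]
    have hrec : ∀ z : ℝ, (Prob ε ρ σ.tail γ.tail fun i => if t.asgn i then z else η i)
        = Prob ε (ρ.map projTrans) σ.tail γ.tail fun i => if t.asgn i then z else η i :=
      fun z => prob_map ε ρ σ.tail γ.tail _
    have hout : (projTrans t).out = t.out := rfl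
    rw [hout]
    cases t.out with
    | inl g =>
      simp only [hrec]; delta Prob.match_4
      exact congrArg (intE _ _) (funext fun z => congrArg (HMul.hMul _) (hrec z))
    | inr b =>
      cases b
      · simp only [hrec]; delta Prob.match_4
        exact congrArg (intE _ _) (funext fun z => congrArg (HMul.hMul _) (hrec z))
      · simp only [hrec]; delta Prob.match_4
        exact congrArg (HMul.hMul _) (congrArg (intE _ _) (funext fun z => congrArg (HMul.hMul _) (hrec z)))

end PreDiPA
namespace PreDiPA
variable {k : ℕ} {A : PreDiPA k}

open Relation

/-- The dependency relation of `ρ` restricted to positions `< n` (the dependency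
graph of the length-`n` prefix of `ρ`). -/
def En (ρ : List A.Trans) (n : ℕ) : ℕ → ℕ → Prop :=
  fun u v => DepEdge ρ u v ∧ u < n ∧ v < n

theorem En.depEdge {ρ : List A.Trans} {n u v : ℕ} (h : En ρ n u v) : DepEdge ρ u v := h.1

theorem En.mono {ρ : List A.Trans} {n m : ℕ} (hnm : n ≤ m) {u v : ℕ} (h : En ρ n u v) :
    En ρ m u v := ⟨h.1, h.2.1.trans_le hnm, h.2.2.trans_le hnm⟩

theorem lastassign_spec {ρ : List A.Trans} {x : Fin k} {n a : ℕ}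
    (h : lastassign ρ x n = (a : WithBot ℕ)) : a < n ∧ assignAt ρ x a = true := by
  have := Finset.mem_of_max h
  simp only [Finset.mem_filter, Finset.mem_range] at this
  exact this

theorem lastassign_succ (ρ : List A.Trans) (x : Fin k) (n : ℕ) :
    lastassign ρ x (n + 1) =
      if assignAt ρ x n = true then (n : WithBot ℕ) else lastassign ρ x n := by
  unfold lastassign
  rw [Finset.range_add_one, Finset.filter_insert]
  split
  · rw [Finset.max_insert]
    have hb : ((Finset.range n).filter fun i => assignAt ρ x i = true).max ≤ (n : WithBot ℕ) := by
      rw [Finset.max_le_iff]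
      intro b hb
      simp only [Finset.mem_filter, Finset.mem_range] at hb
      exact WithBot.coe_le_coe.mpr (le_of_lt hb.1)
    exact max_eq_left hb
  · rfl

theorem lastassign_exists {ρ : List A.Trans} {x : Fin k} {n : ℕ}
    (h : ∃ j < n, assignAt ρ x j = true) : ∃ a : ℕ, lastassign ρ x n = (a : WithBot ℕ) := by
  obtain ⟨j, hj, hja⟩ := h
  have hne : lastassign ρ x n ≠ ⊥ := by
    rw [lastassign, Ne, Finset.max_eq_bot, Finset.filter_eq_empty_iff]
    push_neg
    exact ⟨j, Finset.mem_range.mpr hj, hja⟩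
  cases hmax : lastassign ρ x n with
  | bot => exact absurd hmax hne
  | coe a => exact ⟨a, rfl⟩

theorem lastassign_zero (ρ : List A.Trans) (x : Fin k) : lastassign ρ x 0 = ⊥ := by
  simp [lastassign]

/-- The invariant linking the relations of an augmented state reached after `n` steps
to the dependency graph of the corresponding prefix of `ρ`. -/
def InvRel (ρ : List A.Trans) (n : ℕ) (lt eq : Fin k → Fin k → Bool) : Prop :=
  (∀ x y, eq x y = true ↔
    (x = y ∨ (lastassign ρ x n = lastassign ρ y n ∧ lastassign ρ x n ≠ ⊥))) ∧
  (∀ x y, lt x y = true ↔ ∃ a b : ℕ, lastassign ρ x n = (a : WithBot ℕ) ∧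
    lastassign ρ y n = (b : WithBot ℕ) ∧ TransGen (En ρ n) a b)

theorem invRel_init (ρ : List A.Trans) :
    InvRel ρ 0 (fun _ _ => false) (fun i j => decide (i = j)) := by
  constructor
  · intro x y; simp [lastassign_zero]
  · intro x y; simp [lastassign_zero]

section Step

variable {ρ : List A.Trans} (hfeas : Feasible ρ)

include hfeas in
theorem no_cycle {m a : ℕ} (h : TransGen (En ρ m) a a) : False := by
  obtain ⟨c, hac, hca⟩ := TransGen.head'_iff.mp h
  exact hfeas a c hac.1 (ReflTransGen.mono (fun u v h => h.1) _ _ hca)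

variable {n : ℕ} {t : A.Trans} (ht : ρ[n]? = some t)

include ht in
theorem grdAt_of_getElem (x : Fin k) : grdAt ρ x n = t.grd x := by
  simp [grdAt, ht]

include ht in
theorem assignAt_of_getElem (x : Fin k) : assignAt ρ x n = t.asgn x := by
  simp [assignAt, ht]

include ht in
theorem en1_to {c : ℕ} : En ρ (n + 1) c n ↔
    ∃ x, t.grd x = some true ∧ lastassign ρ x n = (c : WithBot ℕ) := by
  constructor
  · rintro ⟨(⟨x, hc, _, hla⟩ | ⟨x, _, hg, hla⟩), hcn, -⟩
    · have := (lastassign_spec hla).1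
      omega
    · exact ⟨x, by rwa [grdAt_of_getElem ht] at hg, hla⟩
  · rintro ⟨x, hg, hla⟩
    have hc := (lastassign_spec hla).1
    have hlen : n < ρ.length := (List.getElem?_eq_some_iff.mp ht).1
    exact ⟨Or.inr ⟨x, hlen, by rwa [grdAt_of_getElem ht], hla⟩, by omega, by omega⟩

include ht in
theorem en1_from {c : ℕ} : En ρ (n + 1) n c ↔
    ∃ x, t.grd x = some false ∧ lastassign ρ x n = (c : WithBot ℕ) := by
  constructor
  · rintro ⟨(⟨x, _, hg, hla⟩ | ⟨x, hc, _, hla⟩), -, hcn⟩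
    · exact ⟨x, by rwa [grdAt_of_getElem ht] at hg, hla⟩
    · have := (lastassign_spec hla).1
      omega
  · rintro ⟨x, hg, hla⟩
    have hc := (lastassign_spec hla).1
    have hlen : n < ρ.length := (List.getElem?_eq_some_iff.mp ht).1
    exact ⟨Or.inl ⟨x, hlen, by rwa [grdAt_of_getElem ht], hla⟩, by omega, by omega⟩

theorem en1_restrict {u v : ℕ} (h : En ρ (n + 1) u v) (hu : u ≠ n) (hv : v ≠ n) :
    En ρ n u v := by
  obtain ⟨hd, h1, h2⟩ := h
  exact ⟨hd, by omega, by omega⟩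

theorem path_split {a b : ℕ} (h : ReflTransGen (En ρ (n + 1)) a b) :
    ReflTransGen (En ρ n) a b ∨
      (ReflTransGen (En ρ (n + 1)) a n ∧ ReflTransGen (En ρ (n + 1)) n b) := by
  refine ReflTransGen.head_induction_on h (Or.inl ReflTransGen.refl) ?_
  intro a' c' hac hcb ih
  · by_cases ha : a' = n
    · subst ha
      exact Or.inr ⟨ReflTransGen.refl, ReflTransGen.head hac hcb⟩
    by_cases hc : c' = n
    · rw [hc] at hac ih
      rcases ih with ih | ih
      · exact Or.inr ⟨ReflTransGen.single hac, ReflTransGen.mono (fun u v h => h.mono (Nat.le_succ n)) _ _ ih⟩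
      · exact Or.inr ⟨ReflTransGen.single hac, ih.2⟩
    · rcases ih with ih | ih
      · exact Or.inl (ReflTransGen.head (en1_restrict hac ha hc) ih)
      · exact Or.inr ⟨ReflTransGen.head hac ih.1, ih.2⟩

end Step

end PreDiPA
namespace PreDiPA
variable {k : ℕ} {A : PreDiPA k}
open Relation

section Step2

variable {ρ : List A.Trans} (hfeas : Feasible ρ)
  (hg : ∀ i x, grdAt ρ x i ≠ none → ∃ j < i, assignAt ρ x j = true)
  {n : ℕ} {t : A.Trans} (ht : ρ[n]? = some t)
  {lt eq : Fin k → Fin k → Bool} (hinv : InvRel ρ n lt eq)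

include hg ht in
theorem guard_la {x : Fin k} {b0 : Bool} (hx : t.grd x = some b0) :
    ∃ a : ℕ, lastassign ρ x n = (a : WithBot ℕ) :=
  lastassign_exists (hg n x (by rw [grdAt_of_getElem ht, hx]; simp))

include hfeas hg ht hinv in
theorem smB_iff (x : Fin k) : smB lt eq t.grd x = true ↔
    ∃ a : ℕ, lastassign ρ x n = (a : WithBot ℕ) ∧ TransGen (En ρ (n + 1)) a n := by
  constructor
  · intro h
    rw [smB, decide_eq_true_iff] at h
    obtain ⟨j, hrel, hgj⟩ := h
    obtain ⟨c, hcj⟩ := guard_la hg ht hgj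
    have hedge : En ρ (n + 1) c n := (en1_to ht).mpr ⟨j, hgj, hcj⟩
    rcases hrel with hlt | heq
    · obtain ⟨a, b, hax, hbj, htg⟩ := (hinv.2 x j).mp hlt
      have hbc : b = c := by rw [hbj] at hcj; exact_mod_cast hcj
      subst hbc
      exact ⟨a, hax, (TransGen.mono (fun u v h => h.mono (Nat.le_succ n)) _ _ htg).tail hedge⟩
    · rcases (hinv.1 x j).mp heq with rfl | ⟨hxy, -⟩
      · exact ⟨c, hcj, TransGen.single hedge⟩
      · exact ⟨c, hxy.trans hcj, TransGen.single hedge⟩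
  · rintro ⟨a, hax, htg⟩
    obtain ⟨c, hpath, hedge⟩ := TransGen.tail'_iff.mp htg
    obtain ⟨j, hgj, hcj⟩ := (en1_to ht).mp hedge
    rw [smB, decide_eq_true_iff]
    rcases path_split hpath with hp | ⟨-, hp2⟩
    · rcases reflTransGen_iff_eq_or_transGen.mp hp with rfl | htg'
      · refine ⟨j, Or.inr ((hinv.1 x j).mpr (Or.inr ⟨?_, ?_⟩)), hgj⟩
        · rw [hax, hcj]
        · rw [hax]; exact WithBot.coe_ne_bot
      · exact ⟨j, Or.inl ((hinv.2 x j).mpr ⟨a, c, hax, hcj, htg'⟩), hgj⟩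
    · exact absurd (ReflTransGen.mono (fun u v h => h.1) _ _ hp2) (hfeas c n hedge.1)

include hfeas hg ht hinv in
theorem lgB_iff (y : Fin k) : lgB lt eq t.grd y = true ↔
    ∃ b : ℕ, lastassign ρ y n = (b : WithBot ℕ) ∧ TransGen (En ρ (n + 1)) n b := by
  constructor
  · intro h
    rw [lgB, decide_eq_true_iff] at h
    obtain ⟨j, hrel, hgj⟩ := h
    obtain ⟨c, hcj⟩ := guard_la hg ht hgj
    have hedge : En ρ (n + 1) n c := (en1_from ht).mpr ⟨j, hgj, hcj⟩
    rcases hrel with hlt | heq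
    · obtain ⟨a, b, haj, hby, htg⟩ := (hinv.2 j y).mp hlt
      have hac : a = c := by rw [haj] at hcj; exact_mod_cast hcj
      subst hac
      exact ⟨b, hby, TransGen.head hedge (TransGen.mono (fun u v h => h.mono (Nat.le_succ n)) _ _ htg)⟩
    · rcases (hinv.1 j y).mp heq with rfl | ⟨hxy, -⟩
      · exact ⟨c, hcj, TransGen.single hedge⟩
      · exact ⟨c, hxy.symm.trans hcj, TransGen.single hedge⟩
  · rintro ⟨b, hby, htg⟩
    obtain ⟨c, hedge, hpath⟩ := TransGen.head'_iff.mp htg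
    obtain ⟨j, hgj, hcj⟩ := (en1_from ht).mp hedge
    rw [lgB, decide_eq_true_iff]
    rcases path_split hpath with hp | ⟨hp1, -⟩
    · rcases reflTransGen_iff_eq_or_transGen.mp hp with rfl | htg'
      · refine ⟨j, Or.inr ((hinv.1 j y).mpr (Or.inr ⟨?_, ?_⟩)), hgj⟩
        · rw [hby, hcj]
        · rw [hcj]; exact WithBot.coe_ne_bot
      · exact ⟨j, Or.inl ((hinv.2 j y).mpr ⟨c, b, hcj, hby, htg'⟩), hgj⟩
    · exact absurd (ReflTransGen.mono (fun u v h => h.1) _ _ hp1) (hfeas n c hedge.1)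

include ht in
theorem la_succ_eq (z : Fin k) : lastassign ρ z (n + 1) =
    if t.asgn z = true then ((n : WithBot ℕ)) else lastassign ρ z n := by
  rw [lastassign_succ, assignAt_of_getElem ht]

theorem la_ne_n {z : Fin k} : lastassign ρ z n ≠ ((n : WithBot ℕ)) := by
  intro hc
  have := (lastassign_spec hc).1
  omega

include ht hinv in
theorem eqAfter_iff (x y : Fin k) : eqAfterB eq t.asgn x y = true ↔
    (x = y ∨ (lastassign ρ x (n + 1) = lastassign ρ y (n + 1) ∧
      lastassign ρ x (n + 1) ≠ ⊥)) := by
  by_cases hbx : t.asgn x = true <;> by_cases hby : t.asgn y = true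
  · refine iff_of_true (by simp [eqAfterB, hbx, hby]) (Or.inr ⟨?_, ?_⟩)
    · rw [la_succ_eq ht, la_succ_eq ht, if_pos hbx, if_pos hby]
    · rw [la_succ_eq ht, if_pos hbx]; exact WithBot.coe_ne_bot
  · refine iff_of_false (by simp [eqAfterB, hbx, hby]) ?_
    rintro (rfl | ⟨h1, -⟩)
    · exact hby hbx
    · rw [la_succ_eq ht, la_succ_eq ht, if_pos hbx, if_neg hby] at h1
      exact la_ne_n h1.symm
  · refine iff_of_false (by simp [eqAfterB, hbx, hby]) ?_
    rintro (rfl | ⟨h1, -⟩)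
    · exact hbx hby
    · rw [la_succ_eq ht, la_succ_eq ht, if_neg hbx, if_pos hby] at h1
      exact la_ne_n h1
  · have hL : eqAfterB eq t.asgn x y = eq x y := by simp [eqAfterB, hbx, hby]
    rw [hL, la_succ_eq ht, la_succ_eq ht, if_neg hbx, if_neg hby]
    exact hinv.1 x y

include hfeas hg ht hinv in
theorem ltAfter_iff (x y : Fin k) : ltAfterB lt eq t.grd t.asgn x y = true ↔
    ∃ a b : ℕ, lastassign ρ x (n + 1) = (a : WithBot ℕ) ∧
      lastassign ρ y (n + 1) = (b : WithBot ℕ) ∧ TransGen (En ρ (n + 1)) a b := by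
  by_cases hbx : t.asgn x = true <;> by_cases hby : t.asgn y = true
  · refine iff_of_false (by simp [ltAfterB, hbx, hby]) ?_
    rintro ⟨a, b, ha, hb, htg⟩
    rw [la_succ_eq ht, if_pos hbx] at ha
    rw [la_succ_eq ht, if_pos hby] at hb
    have ha' : a = n := by exact_mod_cast ha.symm
    have hb' : b = n := by exact_mod_cast hb.symm
    subst ha' hb'
    exact no_cycle hfeas htg
  · have hL : ltAfterB lt eq t.grd t.asgn x y = lgB lt eq t.grd y := by
      simp [ltAfterB, hbx, hby]
    rw [hL, lgB_iff hfeas hg ht hinv]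
    constructor
    · rintro ⟨b, hb, htg⟩
      exact ⟨n, b, by rw [la_succ_eq ht, if_pos hbx], by rw [la_succ_eq ht, if_neg hby]; exact hb,
        htg⟩
    · rintro ⟨a, b, ha, hb, htg⟩
      rw [la_succ_eq ht, if_pos hbx] at ha
      rw [la_succ_eq ht, if_neg hby] at hb
      have ha' : a = n := by exact_mod_cast ha.symm
      subst ha'
      exact ⟨b, hb, htg⟩
  · have hL : ltAfterB lt eq t.grd t.asgn x y = smB lt eq t.grd x := by
      simp [ltAfterB, hbx, hby]
    rw [hL, smB_iff hfeas hg ht hinv]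
    constructor
    · rintro ⟨a, ha, htg⟩
      exact ⟨a, n, by rw [la_succ_eq ht, if_neg hbx]; exact ha, by rw [la_succ_eq ht, if_pos hby],
        htg⟩
    · rintro ⟨a, b, ha, hb, htg⟩
      rw [la_succ_eq ht, if_neg hbx] at ha
      rw [la_succ_eq ht, if_pos hby] at hb
      have hb' : b = n := by exact_mod_cast hb.symm
      subst hb'
      exact ⟨a, ha, htg⟩
  · have hL : ltAfterB lt eq t.grd t.asgn x y = true ↔
        (lt x y = true ∨ (smB lt eq t.grd x = true ∧ lgB lt eq t.grd y = true)) := by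
      simp [ltAfterB, ltBeforeB, hbx, hby]
    rw [hL, la_succ_eq ht, la_succ_eq ht, if_neg hbx, if_neg hby]
    constructor
    · rintro (hlt | ⟨hsm, hlg⟩)
      · obtain ⟨a, b, ha, hb, htg⟩ := (hinv.2 x y).mp hlt
        exact ⟨a, b, ha, hb, TransGen.mono (fun u v h => h.mono (Nat.le_succ n)) _ _ htg⟩
      · obtain ⟨a, ha, tg1⟩ := (smB_iff hfeas hg ht hinv x).mp hsm
        obtain ⟨b, hb, tg2⟩ := (lgB_iff hfeas hg ht hinv y).mp hlg
        exact ⟨a, b, ha, hb, tg1.trans tg2⟩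
    · rintro ⟨a, b, ha, hb, htg⟩
      rcases path_split htg.to_reflTransGen with hp | ⟨hp1, hp2⟩
      · rcases reflTransGen_iff_eq_or_transGen.mp hp with rfl | htg'
        · exact absurd htg (no_cycle hfeas)
        · exact Or.inl ((hinv.2 x y).mpr ⟨a, b, ha, hb, htg'⟩)
      · have han : a ≠ n := fun h => la_ne_n (h ▸ ha)
        have hbn : b ≠ n := fun h => la_ne_n (h ▸ hb)
        have tg1 : TransGen (En ρ (n + 1)) a n := by
          rcases reflTransGen_iff_eq_or_transGen.mp hp1 with h | h
          · exact absurd h.symm han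
          · exact h
        have tg2 : TransGen (En ρ (n + 1)) n b := by
          rcases reflTransGen_iff_eq_or_transGen.mp hp2 with h | h
          · exact absurd h hbn
          · exact h
        exact Or.inr ⟨(smB_iff hfeas hg ht hinv x).mpr ⟨a, ha, tg1⟩,
          (lgB_iff hfeas hg ht hinv y).mpr ⟨b, hb, tg2⟩⟩

end Step2

end PreDiPA
namespace PreDiPA
variable {k : ℕ} {A : PreDiPA k}
open Relation

theorem Trans.ext' {B : PreDiPA k} : ∀ {t1 t2 : B.Trans}, t1.src = t2.src →
    t1.grd = t2.grd → t1.trg = t2.trg → t1.out = t2.out → t1.asgn = t2.asgn → t1 = t2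
  | ⟨_, _, _, _, _, _⟩, ⟨_, _, _, _, _, _⟩, h1, h2, h3, h4, h5 => by
    cases h1; cases h2; cases h3; cases h4; cases h5; rfl

section Step3

variable {ρ : List A.Trans} (hfeas : Feasible ρ)
  (hg : ∀ i x, grdAt ρ x i ≠ none → ∃ j < i, assignAt ρ x j = true)
  {n : ℕ} {t : A.Trans} (ht : ρ[n]? = some t)
  {lt eq : Fin k → Fin k → Bool} (hinv : InvRel ρ n lt eq)

include hfeas hg ht hinv in
theorem ltBefore_eq_disjoint :
    ∀ i j, ¬(ltBeforeB lt eq t.grd i j = true ∧ eq i j = true) := by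
  rintro i j ⟨hb, he⟩
  have he' := (hinv.1 i j).mp he
  rw [ltBeforeB, Bool.or_eq_true, Bool.and_eq_true] at hb
  have key : lastassign ρ i n = lastassign ρ j n := by
    rcases he' with rfl | ⟨h1, -⟩
    · rfl
    · exact h1
  rcases hb with hlt | ⟨hsm, hlg⟩
  · obtain ⟨a, b, ha, hb', htg⟩ := (hinv.2 i j).mp hlt
    have hab : a = b := by rw [ha, hb'] at key; exact_mod_cast key
    subst hab
    exact no_cycle hfeas (TransGen.mono (fun u v h => h.mono (Nat.le_succ n)) _ _ htg)
  · obtain ⟨a, ha, tg1⟩ := (smB_iff hfeas hg ht hinv i).mp hsm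
    obtain ⟨b, hb', tg2⟩ := (lgB_iff hfeas hg ht hinv j).mp hlg
    have hab : a = b := by rw [ha, hb'] at key; exact_mod_cast key
    subst hab
    exact no_cycle hfeas (tg1.trans tg2)

include hfeas hg ht hinv in
theorem augOK_after :
    AugOK (ltAfterB lt eq t.grd t.asgn) (eqAfterB eq t.asgn) := by
  have hlt' := ltAfter_iff hfeas hg ht hinv
  have heq' := eqAfter_iff ht hinv
  have coeinj : ∀ {a b : ℕ}, (a : WithBot ℕ) = (b : WithBot ℕ) → a = b := by
    intro a b h; exact_mod_cast h
  refine ⟨?_, ?_, ?_, ?_, ?_, ?_, ?_⟩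
  · intro i
    rw [Bool.eq_false_iff]
    intro hc
    obtain ⟨a, b, ha, hb, htg⟩ := (hlt' i i).mp hc
    have : a = b := coeinj (ha.symm.trans hb)
    subst this
    exact no_cycle hfeas htg
  · intro i j l h1 h2
    obtain ⟨a, b, ha, hb, t1⟩ := (hlt' i j).mp h1
    obtain ⟨b', c, hb2, hc, t2⟩ := (hlt' j l).mp h2
    have : b' = b := coeinj (hb2.symm.trans hb)
    subst this
    exact (hlt' i l).mpr ⟨a, c, ha, hc, t1.trans t2⟩
  · intro i
    exact (heq' i i).mpr (Or.inl rfl)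
  · intro i j h
    rcases (heq' i j).mp h with rfl | ⟨h1, h2⟩
    · exact h
    · exact (heq' j i).mpr (Or.inr ⟨h1.symm, h1 ▸ h2⟩)
  · intro i j l h1 h2
    rcases (heq' i j).mp h1 with rfl | ⟨e1, ne1⟩
    · exact h2
    rcases (heq' j l).mp h2 with rfl | ⟨e2, ne2⟩
    · exact h1
    exact (heq' i l).mpr (Or.inr ⟨e1.trans e2, ne1⟩)
  · rintro i j ⟨h1, h2⟩
    obtain ⟨a, b, ha, hb, htg⟩ := (hlt' i j).mp h1
    have key : lastassign ρ i (n + 1) = lastassign ρ j (n + 1) := by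
      rcases (heq' i j).mp h2 with rfl | ⟨e, -⟩
      · rfl
      · exact e
    have hab : a = b := by rw [ha, hb] at key; exact_mod_cast key
    subst hab
    exact no_cycle hfeas htg
  · intro i j l h1 h2
    rcases h1 with h1 | h1 <;> rcases h2 with h2 | h2
    · obtain ⟨a, b, ha, hb, t1⟩ := (hlt' i j).mp h1
      obtain ⟨b', c, hb2, hc, t2⟩ := (hlt' j l).mp h2
      have : b' = b := coeinj (hb2.symm.trans hb)
      subst this
      exact Or.inl ((hlt' i l).mpr ⟨a, c, ha, hc, t1.trans t2⟩)
    · rcases (heq' j l).mp h2 with rfl | ⟨e, -⟩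
      · exact Or.inl h1
      · obtain ⟨a, b, ha, hb, htg⟩ := (hlt' i j).mp h1
        exact Or.inl ((hlt' i l).mpr ⟨a, b, ha, e ▸ hb, htg⟩)
    · rcases (heq' i j).mp h1 with rfl | ⟨e, -⟩
      · exact Or.inl h2
      · obtain ⟨a, b, ha, hb, htg⟩ := (hlt' j l).mp h2
        exact Or.inl ((hlt' i l).mpr ⟨a, b, e.trans ha, hb, htg⟩)
    · rcases (heq' i j).mp h1 with rfl | ⟨e1, ne1⟩
      · exact Or.inr h2
      rcases (heq' j l).mp h2 with rfl | ⟨e2, ne2⟩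
      · exact Or.inr h1
      exact Or.inr ((heq' i l).mpr (Or.inr ⟨e1.trans e2, ne1⟩))

include hfeas hg ht in
theorem step_trans {s : AugState A} (hs : s.val.1 = t.src)
    (hinv : InvRel ρ n s.val.2.1 s.val.2.2) :
    ∃ u : (aug A).Trans, u.src = s ∧ projTrans u = t ∧
      InvRel ρ (n + 1) u.trg.val.2.1 u.trg.val.2.2 := by
  have hδ : A.δ s.val.1 t.grd = some (t.trg, t.out, t.asgn) := by rw [hs]; exact t.valid
  have hcond : (∀ i j, ¬(ltBeforeB s.val.2.1 s.val.2.2 t.grd i j = true ∧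
        s.val.2.2 i j = true)) ∧
      AugOK (ltAfterB s.val.2.1 s.val.2.2 t.grd t.asgn) (eqAfterB s.val.2.2 t.asgn) :=
    ⟨ltBefore_eq_disjoint hfeas hg ht hinv, augOK_after hfeas hg ht hinv⟩
  have hδ' : augδ A s t.grd = some
      (⟨(t.trg, ltAfterB s.val.2.1 s.val.2.2 t.grd t.asgn, eqAfterB s.val.2.2 t.asgn),
        hcond.2⟩, t.out, t.asgn) := by
    rw [augδ, hδ, Option.bind_some, dif_pos hcond]
  refine ⟨⟨s, t.grd, _, t.out, t.asgn, hδ'⟩, rfl, ?_, ?_⟩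
  · exact Trans.ext' hs rfl rfl rfl rfl
  · exact ⟨eqAfter_iff ht hinv, ltAfter_iff hfeas hg ht hinv⟩

end Step3

theorem chain_consec {ρ : List A.Trans} (hrun : IsRun ρ) {n : ℕ} {t t' : A.Trans}
    (ht : ρ[n]? = some t) (ht' : ρ[n + 1]? = some t') : t.trg = t'.src := by
  obtain ⟨hn1, he1⟩ := List.getElem?_eq_some_iff.mp ht
  obtain ⟨hn2, he2⟩ := List.getElem?_eq_some_iff.mp ht'
  have h := List.isChain_iff_getElem.mp hrun n (by omega)
  rw [← he1, ← he2]
  exact h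

theorem lift_exists {ρ : List A.Trans} (hfeas : Feasible ρ)
    (hg : ∀ i x, grdAt ρ x i ≠ none → ∃ j < i, assignAt ρ x j = true)
    (hrun : IsRun ρ) :
    ∀ m n, ρ.length - n ≤ m → ∀ s : AugState A,
      (∀ t' : A.Trans, ρ[n]? = some t' → t'.src = s.val.1) →
      InvRel ρ n s.val.2.1 s.val.2.2 →
      ∃ l : List (aug A).Trans, IsRun l ∧ (∀ u, l.head? = some u → u.src = s) ∧
        l.map projTrans = ρ.drop n := by
  intro m
  induction m with
  | zero =>
    intro n hn s _ _
    refine ⟨[], List.isChain_nil, by simp, ?_⟩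
    rw [List.map_nil, List.drop_eq_nil_of_le (by omega)]
  | succ m ih =>
    intro n hn s hsrc hinv
    by_cases hlen : n < ρ.length
    · have ht : ρ[n]? = some ρ[n] := List.getElem?_eq_getElem hlen
      obtain ⟨u, hu_src, hu_proj, hinv'⟩ := step_trans hfeas hg ht (hsrc _ ht).symm hinv
      have hnext : ∀ t' : A.Trans, ρ[n + 1]? = some t' → t'.src = u.trg.val.1 := by
        intro t' ht'
        have h1 : ρ[n].trg = t'.src := chain_consec hrun ht ht'
        have h2 : u.trg.val.1 = ρ[n].trg := congrArg Trans.trg hu_proj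
        rw [h2, h1]
      obtain ⟨l, hlrun, hlhead, hlmap⟩ := ih (n + 1) (by omega) u.trg hnext hinv'
      refine ⟨u :: l, ?_, ?_, ?_⟩
      · rw [IsRun, List.Chain', List.isChain_cons]
        exact ⟨fun v hv => (hlhead v (Option.mem_def.mp hv)).symm, hlrun⟩
      · intro v hv
        rw [List.head?_cons, Option.some_inj] at hv
        rw [← hv]
        exact hu_src
      · rw [List.map_cons, hu_proj, hlmap, ← List.drop_eq_getElem_cons hlen]
    · refine ⟨[], List.isChain_nil, by simp, ?_⟩
      rw [List.map_nil, List.drop_eq_nil_of_le (by omega)]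

theorem lift_unique : ∀ (l1 l2 : List (aug A).Trans) (s : AugState A),
    IsRun l1 → IsRun l2 → (∀ u, l1.head? = some u → u.src = s) →
    (∀ u, l2.head? = some u → u.src = s) → l1.map projTrans = l2.map projTrans →
    l1 = l2 := by
  intro l1
  induction l1 with
  | nil =>
    intro l2 s _ _ _ _ hmap
    exact (List.map_eq_nil_iff.mp hmap.symm).symm
  | cons u1 l1 ih =>
    intro l2 s hr1 hr2 hh1 hh2 hmap
    cases l2 with
    | nil => simp at hmap
    | cons u2 l2 =>
      rw [List.map_cons, List.map_cons] at hmap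
      injection hmap with hhead htail
      have hsrc : u1.src = u2.src := (hh1 u1 rfl).trans (hh2 u2 rfl).symm
      have hgrd : u1.grd = u2.grd := congrArg (fun t : A.Trans => t.grd) hhead
      have hv2 := u2.valid
      rw [← hsrc, ← hgrd] at hv2
      have htriple := Option.some_inj.mp (u1.valid.symm.trans hv2)
      have htrg : u1.trg = u2.trg := congrArg Prod.fst htriple
      have hout : u1.out = u2.out := congrArg (fun p => p.2.1) htriple
      have hasgn : u1.asgn = u2.asgn := congrArg (fun p => p.2.2) htriple
      have hu : u1 = u2 := Trans.ext' hsrc hgrd htrg hout hasgn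
      subst hu
      have hd1 := (List.isChain_cons.mp hr1).1
      have hd2 := (List.isChain_cons.mp hr2).1
      have : l1 = l2 := ih l2 u1.trg (List.isChain_cons.mp hr1).2
        (List.isChain_cons.mp hr2).2
        (fun v hv => (hd1 v (Option.mem_def.mpr hv)).symm)
        (fun v hv => (hd2 v (Option.mem_def.mpr hv)).symm) htail
      rw [this]

end PreDiPA
theorem aug_proj_prob_and_unique_lift {k : ℕ} (A : DiPA k)
    (hinit : Initialized A.toPreDiPA) :
    (∀ (ρ : List (aug A.toPreDiPA).Trans) (σ : InSeq)
        (γ : List (A.toPreDiPA.Γ ⊕ EReal × EReal)) (η : Fin k → ℝ),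
      IsRun ρ → IsRunOn ρ σ γ →
      (∀ t, ρ.head? = some t → Compatible η t.src) →
      (∀ ε : ℝ, 0 < ε → Prob ε ρ σ γ η = Prob ε (ρ.map projTrans) σ γ η) ∧
      (∀ a b : ℕ, DepEdge ρ a b ↔ DepEdge (ρ.map projTrans) a b)) ∧
    (∀ ρ : List A.toPreDiPA.Trans, IsRunFrom A.toPreDiPA.qinit ρ → Feasible ρ →
      ∃! ρ' : List (aug A.toPreDiPA).Trans,
        IsRunFrom (aug A.toPreDiPA).qinit ρ' ∧ ρ'.map projTrans = ρ) := by
  constructor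
  · intro ρ σ γ η _ _ _
    exact ⟨fun ε _ => prob_map ε ρ σ γ η, fun a b => (depEdge_map ρ a b).symm⟩
  · intro ρ hrun hfeas
    have hg := hinit ρ hrun
    have hhead0 : ∀ t' : A.toPreDiPA.Trans, ρ[0]? = some t' →
        t'.src = (aug A.toPreDiPA).qinit.val.1 := by
      intro t' ht'
      exact hrun.2 t' (by rwa [List.head?_eq_getElem?])
    obtain ⟨l, hlrun, hlhead, hlmap⟩ := lift_exists hfeas hg hrun.1 ρ.length 0 (by omega)
      (aug A.toPreDiPA).qinit hhead0 (invRel_init ρ)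
    rw [List.drop_zero] at hlmap
    refine ⟨l, ⟨⟨hlrun, hlhead⟩, hlmap⟩, ?_⟩
    rintro y ⟨⟨hyrun, hyhead⟩, hymap⟩
    exact lift_unique y l (aug A.toPreDiPA).qinit hyrun hlrun hyhead hlhead
      (hymap.trans hlmap.symm)
end

section
/- Let A be an initialized DiPA, aug(A) its augmentation, and κ=(ρ,σ,γ) a computation of aug(A). Let η_1,η_2 be valuations compatible with src(ρ) such that η_1(x)=η_2(x) for every storage variable x∈usedv(ρ) (where usedv of a run is defined by usedv(ρ[n:])=∅ and usedv(ρ[j:])=smallv(t_j)∪largev(t_j)∪(nonassignv(t_j)∩usedv(ρ[j+1:])), and usedv(ρ)=usedv(ρ[0:])). Then for every ε>0, Prob(ε,η_1,κ)=Prob(ε,η_2,κ). -/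
open PreDiPA

/-- `Prob` only depends on the valuation through the variables used in the run. -/
lemma prob_congr_usedv {k : ℕ} {A : PreDiPA k} (ε : ℝ) :
    ∀ (ρ : List A.Trans) (σ : InSeq) (γ : OutSeq A) (η₁ η₂ : Fin k → ℝ),
      (∀ x, usedvRun ρ x → η₁ x = η₂ x) → Prob ε ρ σ γ η₁ = Prob ε ρ σ γ η₂
  | [], _, _, _, _, _ => rfl
  | t :: ρ, σ, γ, η₁, η₂, heq => by
    have hg : ∀ i (b : Bool), t.grd i = some b → η₁ i = η₂ i := fun i b h =>
      heq i (Or.inl (by simp [h]))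
    have hsup :
        ((Finset.univ.filter fun i => t.grd i = some true).sup
          fun i => ((η₁ i : ℝ) : EReal)) =
        ((Finset.univ.filter fun i => t.grd i = some true).sup
          fun i => ((η₂ i : ℝ) : EReal)) :=
      Finset.sup_congr rfl fun i hi => by
        rw [hg i true (by simpa using hi)]
    have hinf :
        ((Finset.univ.filter fun i => t.grd i = some false).inf
          fun i => ((η₁ i : ℝ) : EReal)) =
        ((Finset.univ.filter fun i => t.grd i = some false).inf
          fun i => ((η₂ i : ℝ) : EReal)) :=
      Finset.inf_congr rfl fun i hi => by
        rw [hg i false (by simpa using hi)]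
    have hrec : ∀ z : ℝ,
        Prob ε ρ σ.tail γ.tail (fun i => if t.asgn i then z else η₁ i) =
        Prob ε ρ σ.tail γ.tail (fun i => if t.asgn i then z else η₂ i) := fun z =>
      prob_congr_usedv ε ρ σ.tail γ.tail _ _ fun x hx => by
        by_cases h : t.asgn x
        · simp [h]
        · simp only [h, if_neg, Bool.false_eq_true]
          exact heq x (Or.inr ⟨by simpa using h, hx⟩)
    have hfun : ∀ d μ : ℝ,
        (fun z => lap (d * ε) (μ) z *
          Prob ε ρ σ.tail γ.tail fun i => if t.asgn i then z else η₁ i) =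
        (fun z => lap (d * ε) (μ) z *
          Prob ε ρ σ.tail γ.tail fun i => if t.asgn i then z else η₂ i) :=
      fun d μ => funext fun z => by rw [hrec z]
    show Prob ε (t :: ρ) σ γ η₁ = Prob ε (t :: ρ) σ γ η₂
    simp only [Prob]
    rw [hsup, hinf]
    rcases t.out with g | b
    · simp only []
      rw [hfun]
    · cases b <;> simp only [] <;> rw [hfun]

theorem aug_prob_usedv_invariance {k : ℕ} (A : DiPA k)
    (hinit : Initialized A.toPreDiPA)
    (ρ : List (aug A.toPreDiPA).Trans) (σ : InSeq)
    (γ : List (A.toPreDiPA.Γ ⊕ EReal × EReal))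
    (hrun : IsRun ρ) (hon : IsRunOn ρ σ γ)
    (η₁ η₂ : Fin k → ℝ)
    (hc1 : ∀ t, ρ.head? = some t → Compatible η₁ t.src)
    (hc2 : ∀ t, ρ.head? = some t → Compatible η₂ t.src)
    (heq : ∀ x : Fin k, usedvRun ρ x → η₁ x = η₂ x)
    (ε : ℝ) (hε : 0 < ε) :
    Prob ε ρ σ γ η₁ = Prob ε ρ σ γ η₂ :=
  prob_congr_usedv ε ρ σ γ η₁ η₂ heq
end

section
/- Let d>0, Δ>0, and μ,ψ∈ℝ. Then there exists ε'>0 such that for all ε>ε': ∫_{ψ−Δ/2}^{ψ+Δ/2} (dε/2)·e^{−dε|x−μ|} dx ≥ (1/4)·e^{−dε·|μ−ψ−Δ/2|}. -/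
open Real MeasureTheory intervalIntegral

lemma exp_int_aux (k m a b : ℝ) (hk : k ≠ 0) :
    ∫ x in a..b, Real.exp (k * (x - m)) =
      (Real.exp (k * (b - m)) - Real.exp (k * (a - m))) / k := by
  have hd : ∀ x ∈ Set.uIcc a b,
      HasDerivAt (fun y => Real.exp (k * (y - m)) / k) (Real.exp (k * (x - m))) x := by
    intro x _
    have h1 : HasDerivAt (fun y => k * (y - m)) k x := by
      simpa using ((hasDerivAt_id x).sub_const m).const_mul k
    have h2 := h1.exp.div_const k
    rwa [mul_div_cancel_right₀ _ hk] at h2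
  have hint : IntervalIntegrable (fun x => Real.exp (k * (x - m))) volume a b := by
    apply Continuous.intervalIntegrable
    fun_prop
  have := intervalIntegral.integral_eq_sub_of_hasDerivAt hd hint
  rw [this]
  ring

/-- For `k > 0` and `μ ∈ ℝ`, the Laplace distribution `Lap(k, μ)` has probability
density function `f_{k,μ}(x) = (k/2)·e^{−k|x−μ|}`.  The statement: for all `d > 0`,
`Δ > 0` and `μ, ψ ∈ ℝ`, there exists `ε' > 0` such that for all `ε > ε'`, the
probability that a `Lap(dε, μ)`-distributed random variable lies in the interval
`[ψ − Δ/2, ψ + Δ/2]` is at least `(1/4)·e^{−dε·|μ−ψ−Δ/2|}`. -/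
theorem laplace_band_lower_bound (d Δ μ ψ : ℝ) (hd : 0 < d) (hΔ : 0 < Δ) :
    ∃ ε' : ℝ, 0 < ε' ∧ ∀ ε : ℝ, ε' < ε →
      (1 / 4 : ℝ) * Real.exp (-(d * ε) * |μ - ψ - Δ / 2|) ≤
        ∫ x in (ψ - Δ / 2)..(ψ + Δ / 2), d * ε / 2 * Real.exp (-(d * ε) * |x - μ|) := by
  refine ⟨max 1 (2 * Real.log 2 / (d * Δ)), lt_of_lt_of_le one_pos (le_max_left _ _), ?_⟩
  intro ε hε
  set a := ψ - Δ / 2 with ha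
  set b := ψ + Δ / 2 with hb
  set k := d * ε with hkdef
  clear_value a b k
  have hε1 : (1 : ℝ) < ε := lt_of_le_of_lt (le_max_left _ _) hε
  have hk : 0 < k := hkdef ▸ mul_pos hd (lt_trans one_pos hε1)
  have hkΔ : 2 * Real.log 2 < k * Δ := by
    have h2 : 2 * Real.log 2 / (d * Δ) < ε := lt_of_le_of_lt (le_max_right _ _) hε
    have hdΔ : 0 < d * Δ := mul_pos hd hΔ
    rw [div_lt_iff₀ hdΔ] at h2
    nlinarith
  have hexp4 : Real.exp (2 * Real.log 2) = 4 := by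
    rw [two_mul, Real.exp_add, Real.exp_log two_pos]; norm_num
  have hE4 : (4 : ℝ) ≤ Real.exp (k * Δ) := by
    calc (4:ℝ) = Real.exp (2 * Real.log 2) := hexp4.symm
    _ ≤ Real.exp (k * Δ) := Real.exp_le_exp.mpr (le_of_lt hkΔ)
  have hE : Real.exp (-(k * Δ)) ≤ 1 / 4 := by
    rw [Real.exp_neg]
    calc (Real.exp (k * Δ))⁻¹ ≤ (4:ℝ)⁻¹ := inv_anti₀ (by norm_num) hE4
    _ = 1 / 4 := by norm_num
  have hab : a ≤ b := by rw [ha, hb]; linarith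
  have hba : b - a = Δ := by rw [ha, hb]; ring
  have habs : |μ - ψ - Δ / 2| = |μ - b| := by rw [hb]; ring_nf
  rcases le_or_gt μ a with hμa | hμa
  · -- μ left of interval
    have hcong : (∫ x in a..b, k / 2 * Real.exp (-k * |x - μ|)) =
        ∫ x in a..b, k / 2 * Real.exp (-k * (x - μ)) := by
      apply intervalIntegral.integral_congr
      intro x hx
      dsimp only
      rw [Set.uIcc_of_le hab] at hx
      rw [abs_of_nonneg (by linarith [hx.1] : (0:ℝ) ≤ x - μ)]
    rw [hcong, intervalIntegral.integral_const_mul,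
      exp_int_aux (-k) μ a b (by linarith : -k ≠ 0)]
    have habs2 : |μ - ψ - Δ / 2| = b - μ := by
      rw [habs, abs_of_nonpos (by linarith), neg_sub]
    rw [habs2]
    have e1 : Real.exp (-k * (a - μ)) = Real.exp (-k * (b - μ)) * Real.exp (k * Δ) := by
      rw [← Real.exp_add]; congr 1; nlinarith [hba]
    have hp : 0 < Real.exp (-k * (b - μ)) := Real.exp_pos _
    rw [e1]
    have hre : k / 2 * ((Real.exp (-k * (b - μ)) - Real.exp (-k * (b - μ)) * Real.exp (k * Δ)) / -k)
        = (Real.exp (-k * (b - μ)) * Real.exp (k * Δ) - Real.exp (-k * (b - μ))) / 2 := by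
      field_simp
      ring
    rw [hre]
    nlinarith [Real.exp_pos (k * Δ)]
  rcases le_or_gt b μ with hbμ | hbμ
  · -- μ right of interval
    have hcong : (∫ x in a..b, k / 2 * Real.exp (-k * |x - μ|)) =
        ∫ x in a..b, k / 2 * Real.exp (k * (x - μ)) := by
      apply intervalIntegral.integral_congr
      intro x hx
      dsimp only
      rw [Set.uIcc_of_le hab] at hx
      rw [abs_of_nonpos (by linarith [hx.2] : x - μ ≤ 0)]
      ring_nf
    rw [hcong, intervalIntegral.integral_const_mul,
      exp_int_aux k μ a b (ne_of_gt hk)]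
    have habs2 : |μ - ψ - Δ / 2| = μ - b := by
      rw [habs, abs_of_nonneg (by linarith)]
    rw [habs2]
    have e1 : Real.exp (k * (a - μ)) = Real.exp (k * (b - μ)) * Real.exp (-(k * Δ)) := by
      rw [← Real.exp_add]; congr 1; nlinarith [hba]
    have e2 : Real.exp (-k * (μ - b)) = Real.exp (k * (b - μ)) := by ring_nf
    rw [e2, e1]
    have hp : 0 < Real.exp (k * (b - μ)) := Real.exp_pos _
    have hre : k / 2 * ((Real.exp (k * (b - μ)) - Real.exp (k * (b - μ)) * Real.exp (-(k * Δ))) / k)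
        = (Real.exp (k * (b - μ)) - Real.exp (k * (b - μ)) * Real.exp (-(k * Δ))) / 2 := by
      field_simp
    rw [hre]
    nlinarith [Real.exp_pos (-(k * Δ))]
  · -- μ inside interval
    have hfc : Continuous (fun x => k / 2 * Real.exp (-k * |x - μ|)) := by fun_prop
    have hsplit : (∫ x in a..b, k / 2 * Real.exp (-k * |x - μ|)) =
        (∫ x in a..μ, k / 2 * Real.exp (-k * |x - μ|)) +
          ∫ x in μ..b, k / 2 * Real.exp (-k * |x - μ|) :=
      (intervalIntegral.integral_add_adjacent_intervals
        (hfc.intervalIntegrable _ _) (hfc.intervalIntegrable _ _)).symm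
    have hc1 : (∫ x in a..μ, k / 2 * Real.exp (-k * |x - μ|)) =
        ∫ x in a..μ, k / 2 * Real.exp (k * (x - μ)) := by
      apply intervalIntegral.integral_congr
      intro x hx
      dsimp only
      rw [Set.uIcc_of_le (le_of_lt hμa)] at hx
      rw [abs_of_nonpos (by linarith [hx.2] : x - μ ≤ 0)]
      ring_nf
    have hc2 : (∫ x in μ..b, k / 2 * Real.exp (-k * |x - μ|)) =
        ∫ x in μ..b, k / 2 * Real.exp (-k * (x - μ)) := by
      apply intervalIntegral.integral_congr
      intro x hx
      dsimp only
      rw [Set.uIcc_of_le (le_of_lt hbμ)] at hx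
      rw [abs_of_nonneg (by linarith [hx.1] : (0:ℝ) ≤ x - μ)]
    rw [hsplit, hc1, hc2, intervalIntegral.integral_const_mul,
      intervalIntegral.integral_const_mul,
      exp_int_aux k μ a μ (ne_of_gt hk),
      exp_int_aux (-k) μ μ b (by linarith : -k ≠ 0)]
    have hU1 : Real.exp (k * (a - μ)) ≤ 1 := Real.exp_le_one_iff.mpr
      (mul_nonpos_of_nonneg_of_nonpos hk.le (by linarith))
    have hV1 : Real.exp (-k * (b - μ)) ≤ 1 := Real.exp_le_one_iff.mpr
      (mul_nonpos_of_nonpos_of_nonneg (by linarith) (by linarith))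
    have hUV : Real.exp (k * (a - μ)) * Real.exp (-k * (b - μ)) ≤ 1 / 4 := by
      rw [← Real.exp_add]
      calc Real.exp (k * (a - μ) + -k * (b - μ)) = Real.exp (-(k * Δ)) := by
            congr 1; linear_combination (-k) * hba
      _ ≤ 1 / 4 := hE
    have hU0 : 0 < Real.exp (k * (a - μ)) := Real.exp_pos _
    have hV0 : 0 < Real.exp (-k * (b - μ)) := Real.exp_pos _
    have hmid : Real.exp (k * (μ - μ)) = 1 := by simp
    have hmid2 : Real.exp (-k * (μ - μ)) = 1 := by simp
    rw [hmid, hmid2]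
    have hsimp : k / 2 * ((1 - Real.exp (k * (a - μ))) / k) +
        k / 2 * ((Real.exp (-k * (b - μ)) - 1) / -k) =
        (1 - Real.exp (k * (a - μ))) / 2 + (1 - Real.exp (-k * (b - μ))) / 2 := by
      field_simp
      ring
    rw [hsimp]
    have hrhs : Real.exp (-k * |μ - ψ - Δ / 2|) ≤ 1 :=
      Real.exp_le_one_iff.mpr
        (mul_nonpos_of_nonpos_of_nonneg (by linarith) (abs_nonneg _))
    have hprod := mul_nonneg (by linarith : (0:ℝ) ≤ 1 - Real.exp (k * (a - μ)))
      (by linarith : (0:ℝ) ≤ 1 - Real.exp (-k * (b - μ)))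
    clear hsplit hc1 hc2 hfc hexp4 hE4 hε habs
    linarith [hprod, hUV, hrhs]
end
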